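/- For every instance of the rationing problem with an unreserved category split into c_u^1 and c_u^2 and every baseline ordering ≻_π, every matching output by the Smart Reverse Rejecting (SRR) rule respects priorities: there are no agents i, j and category c such that the output matches i to c, leaves j unmatched, and j ≻_c i. -/

import Mathlib

open scoped Classical

/-- An instance of the rationing problem: a quota for every category and, for every
category `c`, a priority ranking `≿_c`: a total preorder on `N ∪ {∅}`, where we model
`N ∪ {∅}` as `Option N` with `none` playing the role of `∅`. -/
structure Inst (N C : Type*) where
  quota : C → ℕ
  prio : C → Option N → Option N → Prop
  total : ∀ c x y, prio c x y ∨ prio c y x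
  trans : ∀ c x y z, prio c x y → prio c y z → prio c x z

namespace Inst

variable {N C : Type*}

/-- The strict part `≻_c` of the priority ranking `≿_c`. -/
def Strict (I : Inst N C) (c : C) (x y : Option N) : Prop :=
  I.prio c x y ∧ ¬ I.prio c y x

/-- Agent `i` is eligible for category `c` if `i ≻_c ∅`. -/
def Eligible (I : Inst N C) (i : N) (c : C) : Prop :=
  I.Strict c (some i) none

end Inst

variable {N C : Type*} [Fintype N] [DecidableEq N] [DecidableEq C]

/-- The number of matched agents of (the function) `μ`. -/
def msize (μ : N → Option C) : ℕ :=
  (Finset.univ.filter fun i => μ i ≠ none).card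

/-- `μ` satisfies the capacity constraints: every category `c` is matched
to at most `quota c` agents. -/
def Inst.IsMatching (I : Inst N C) (μ : N → Option C) : Prop :=
  ∀ c, (Finset.univ.filter fun i => μ i = some c).card ≤ I.quota c

/-- A baseline ordering `≻_π`, given as a duplicate-free list of all agents,
listed from highest priority to lowest priority; so `i ≻_π j` iff
`order.indexOf i < order.indexOf j`. -/
def IsBaseline (order : List N) : Prop :=
  order.Nodup ∧ ∀ i : N, i ∈ order

/-- `μ` complies with the eligibility requirements. -/
def Complies (I : Inst N C) (μ : N → Option C) : Prop :=
  ∀ (i : N) (c : C), μ i = some c → I.Eligible i c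

/-- The number of agents matched to a preferential category, i.e. a category other than the
unreserved subcategories `cu1` and `cu2`. -/
def beneCount2 (cu1 cu2 : C) (μ : N → Option C) : ℕ :=
  (Finset.univ.filter fun i => μ i ≠ none ∧ μ i ≠ some cu1 ∧ μ i ≠ some cu2).card

/-- `μ` is a matching of the reservation graph of the instance restricted to the
preferential categories that leaves all agents of `S` unmatched. -/
def PMatch (I : Inst N C) (cu1 cu2 : C) (S : Finset N) (μ : N → Option C) : Prop :=
  I.IsMatching μ ∧ (∀ i ∈ S, μ i = none) ∧
    ∀ (i : N) (c : C), μ i = some c → c ≠ cu1 ∧ c ≠ cu2 ∧ I.Eligible i c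

/-- The maximum number of agents of `N \ S` that can simultaneously be matched to
preferential categories. -/
noncomputable def msAvoid (I : Inst N C) (cu1 cu2 : C) (S : Finset N) : ℕ :=
  sSup {k | ∃ μ : N → Option C, PMatch I cu1 cu2 S μ ∧ msize μ = k}

/-- The set `N_1` of agents receiving an unreserved unit of `c_u^1` under the SRR rule:
considering the agents in order of the baseline ordering from highest to lowest priority,
agent `i` is added to `N_1` if `|N_1| < q_{c_u^1}` and the agents in `N \ (N_1 ∪ {i})` can
still be matched to the preferential categories so as to form a maximum beneficiary
assignment. -/
noncomputable def srrN1 (I : Inst N C) (cu1 cu2 : C) (order : List N) : Finset N :=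
  order.foldl
    (fun N1 i =>
      if N1.card < I.quota cu1 ∧
          msAvoid I cu1 cu2 (insert i N1) = msAvoid I cu1 cu2 (∅ : Finset N) then
        insert i N1
      else N1) ∅

/-- `μ` is a matching of the reduced reservation graph (restricted to the preferential
categories) in which the agents of `N1` are removed and, additionally, all edges `{j,c}`
such that some rejected agent `i ∈ R` has `i ≻_c j` are removed. -/
def PMatchR (I : Inst N C) (cu1 cu2 : C) (N1 R : Finset N) (μ : N → Option C) : Prop :=
  PMatch I cu1 cu2 (N1 ∪ R) μ ∧
    ∀ (i : N) (c : C), μ i = some c → ∀ j ∈ R, ¬ I.Strict c (some j) (some i)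

/-- The size of a maximum size matching of the reduced reservation graph (restricted to the
preferential categories, without the agents of `N1`, with rejected set `R`). -/
noncomputable def msR (I : Inst N C) (cu1 cu2 : C) (N1 R : Finset N) : ℕ :=
  sSup {k | ∃ μ : N → Option C, PMatchR I cu1 cu2 N1 R μ ∧ msize μ = k}

/-- The rejected set of the RR rule run on the agents outside `N1` with the preferential
categories, processing the agents from lowest to highest baseline priority. -/
noncomputable def srrRej (I : Inst N C) (cu1 cu2 : C) (order : List N) (N1 : Finset N) :
    Finset N :=
  (order.filter fun i => decide (i ∉ N1)).foldr
    (fun i R =>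
      if msR I cu1 cu2 N1 (insert i R) = msR I cu1 cu2 N1 (∅ : Finset N) then insert i R
      else R) ∅

/-- The final matching of the SRR rule, given the set `N1` of agents matched to `c_u^1` and
the matching `μP` of the remaining agents to the preferential categories: the agents left
unmatched receive the `q_{c_u^2}` units of `c_u^2` in order of the baseline ordering from
highest to lowest priority. -/
noncomputable def srrFinal (I : Inst N C) (cu1 cu2 : C) (order : List N) (N1 : Finset N)
    (μP : N → Option C) : N → Option C := fun i =>
  if i ∈ N1 then some cu1
  else
    match μP i with
    | some c => some c
    | none =>
      if (Finset.univ.filter fun j =>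
            j ∉ N1 ∧ μP j = none ∧ order.idxOf j < order.idxOf i).card <
          I.quota cu2 then
        some cu2
      else none

/-- `μ` is a possible output of the Smart Reverse Rejecting (SRR) rule. -/
def IsSRROutcome (I : Inst N C) (cu1 cu2 : C) (order : List N) (μ : N → Option C) : Prop :=
  ∃ μP : N → Option C,
    PMatchR I cu1 cu2 (srrN1 I cu1 cu2 order) (srrRej I cu1 cu2 order (srrN1 I cu1 cu2 order))
      μP ∧
    msize μP =
      msR I cu1 cu2 (srrN1 I cu1 cu2 order) (srrRej I cu1 cu2 order (srrN1 I cu1 cu2 order)) ∧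
    μ = srrFinal I cu1 cu2 order (srrN1 I cu1 cu2 order) μP


/-!
Let `μP` be the preferential matching chosen by RR, `i` matched and `j ≻_c i` unmatched.
If `i` holds a unit of `c_u^1`, then `j ≻_π i` was passed over while the quota of `c_u^1` was
not yet exhausted, so removing `j` (together with the agents then in `N_1`) lowers the maximum
beneficiary count; but `μP` attains that count and leaves `j` unmatched. Units of `c_u^2` go
to the agents left unmatched in baseline order, so `j ≻_π i` would be served before `i`.
If `i` holds a preferential unit and RR did not reject `j`, then every maximum matching of the
final reduced graph matches `j`: otherwise swapping `j` for a matched agent it dominates keeps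
the matching maximum and strictly decreases `rankSum`, and once `j` dominates no matched agent
the matching survives the rejection of `j`, which RR refused because it lowers the maximum size.
-/

open Finset

section Greedy

variable {α : Type*} [DecidableEq α] (p : Finset α → α → Prop) [DecidableRel p]

def greedyStep (s : Finset α) (i : α) : Finset α :=
  if p s i then insert i s else s

variable {p}

lemma mem_greedyStep {s : Finset α} {i a : α} :
    i ∈ greedyStep p s a ↔ i ∈ s ∨ i = a ∧ p s a := by
  unfold greedyStep
  split_ifs with h <;> simp [h, or_comm]

lemma subset_greedyStep (s : Finset α) (a : α) : s ⊆ greedyStep p s a :=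
  fun _ hi => mem_greedyStep.2 (Or.inl hi)

lemma subset_foldl_greedyStep (l : List α) (s : Finset α) : s ⊆ l.foldl (greedyStep p) s := by
  induction l generalizing s with
  | nil => exact Subset.rfl
  | cons a l ih => exact (subset_greedyStep s a).trans (ih _)

lemma foldl_greedyStep_induction {Q : Finset α → Prop}
    (hstep : ∀ s i, Q s → p s i → Q (insert i s)) (l : List α) {s : Finset α} (hs : Q s) :
    Q (l.foldl (greedyStep p) s) := by
  induction l generalizing s with
  | nil => exact hs
  | cons a l ih =>
    refine ih ?_
    unfold greedyStep
    split_ifs with h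
    exacts [hstep s a hs h, hs]

lemma exists_of_mem_foldl_greedyStep {l : List α} {s : Finset α} {i : α}
    (hi : i ∈ l.foldl (greedyStep p) s) (his : i ∉ s) :
    ∃ u, s ⊆ u ∧ u ⊆ l.foldl (greedyStep p) s ∧ p u i := by
  induction l generalizing s with
  | nil => exact absurd hi his
  | cons a l ih =>
    by_cases hia : i ∈ greedyStep p s a
    · obtain ⟨rfl, h⟩ := (mem_greedyStep.1 hia).resolve_left his
      exact ⟨s, Subset.rfl, (subset_greedyStep s i).trans (subset_foldl_greedyStep l _), h⟩
    · obtain ⟨u, hsu, hu, h⟩ := ih hi hia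
      exact ⟨u, (subset_greedyStep s a).trans hsu, hu, h⟩

lemma exists_not_of_notMem_foldl_greedyStep {l : List α} {s : Finset α} {i : α} (hl : i ∈ l)
    (hi : i ∉ l.foldl (greedyStep p) s) : ∃ t ⊆ l.foldl (greedyStep p) s, ¬ p t i := by
  induction l generalizing s with
  | nil => cases hl
  | cons a l ih =>
    obtain rfl | hl := List.mem_cons.1 hl
    · refine ⟨s, (subset_greedyStep s i).trans (subset_foldl_greedyStep l _), fun h => hi ?_⟩
      exact subset_foldl_greedyStep l _ (mem_greedyStep.2 (Or.inr ⟨rfl, h⟩))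
    · exact ih hl hi

lemma exists_of_idxOf_lt_of_mem_foldl_greedyStep {l : List α} {s : Finset α} {i j : α}
    (hj : j ∈ l) (hji : l.idxOf j < l.idxOf i) (his : i ∉ s)
    (hi : i ∈ l.foldl (greedyStep p) s) (hjl : j ∉ l.foldl (greedyStep p) s) :
    ∃ t u, t ⊆ u ∧ u ⊆ l.foldl (greedyStep p) s ∧ ¬ p t j ∧ p u i := by
  induction l generalizing s with
  | nil => cases hj
  | cons a l ih =>
    by_cases hja : a = j
    · subst hja
      have hpj : ¬ p s a := fun h =>
        hjl (subset_foldl_greedyStep l _ (mem_greedyStep.2 (Or.inr ⟨rfl, h⟩)))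
      have hstep : greedyStep p s a = s := if_neg hpj
      rw [List.foldl_cons, hstep] at hi ⊢
      obtain ⟨u, hsu, hu, h⟩ := exists_of_mem_foldl_greedyStep hi his
      exact ⟨s, u, hsu, hu, hpj, h⟩
    · have hia : a ≠ i := by rintro rfl; simp at hji
      rw [List.idxOf_cons_ne l hja, List.idxOf_cons_ne l hia] at hji
      exact ih ((List.mem_cons.1 hj).resolve_left (Ne.symm hja)) (Nat.succ_lt_succ_iff.1 hji)
        (by simp [mem_greedyStep, his, Ne.symm hia]) hi hjl

end Greedy

namespace Inst

variable {N C : Type*} {I : Inst N C} {c : C} {x y z : Option N}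

lemma Strict.trans (hxy : I.Strict c x y) (hyz : I.Strict c y z) : I.Strict c x z :=
  ⟨I.trans c x y z hxy.1 hyz.1, fun hzx => hyz.2 (I.trans c z x y hzx hxy.1)⟩

lemma Strict.irrefl : ¬ I.Strict c x x := fun h => h.2 h.1

end Inst

section Matchings

variable {N C : Type*} [Fintype N] {I : Inst N C} {cu1 cu2 : C}

lemma msize_le_card (μ : N → Option C) : msize μ ≤ Fintype.card N :=
  (card_filter_le _ _).trans_eq card_univ

lemma bddAbove_msize (P : (N → Option C) → Prop) :
    BddAbove {k | ∃ μ, P μ ∧ msize μ = k} :=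
  ⟨Fintype.card N, by rintro _ ⟨μ, -, rfl⟩; exact msize_le_card μ⟩

lemma msize_comp_perm (μ : N → Option C) (σ : Equiv.Perm N) : msize (μ ∘ σ) = msize μ :=
  card_equiv σ (by simp)

variable [DecidableEq C]

lemma Inst.IsMatching.comp_perm {μ : N → Option C} (hμ : I.IsMatching μ) (σ : Equiv.Perm N) :
    I.IsMatching (μ ∘ σ) := fun c =>
  (card_equiv σ (by simp)).trans_le (hμ c)

lemma PMatch.anti {S S' : Finset N} {μ : N → Option C} (hμ : PMatch I cu1 cu2 S' μ)
    (h : S ⊆ S') : PMatch I cu1 cu2 S μ :=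
  ⟨hμ.1, fun i hi => hμ.2.1 i (h hi), hμ.2.2⟩

lemma le_msAvoid {S : Finset N} {μ : N → Option C} (hμ : PMatch I cu1 cu2 S μ) :
    msize μ ≤ msAvoid I cu1 cu2 S :=
  le_csSup (bddAbove_msize _) ⟨μ, hμ, rfl⟩

lemma msAvoid_anti {S S' : Finset N} (h : S ⊆ S') :
    msAvoid I cu1 cu2 S' ≤ msAvoid I cu1 cu2 S :=
  csSup_le' <| by rintro _ ⟨μ, hμ, rfl⟩; exact le_msAvoid (hμ.anti h)

variable [DecidableEq N]

lemma PMatch.insert_of_eq_none {S : Finset N} {μ : N → Option C} {x : N}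
    (hμ : PMatch I cu1 cu2 S μ) (hx : μ x = none) : PMatch I cu1 cu2 (insert x S) μ :=
  ⟨hμ.1, by simpa [hx] using hμ.2.1, hμ.2.2⟩

lemma PMatchR.anti {N1 R R' : Finset N} {μ : N → Option C} (hμ : PMatchR I cu1 cu2 N1 R' μ)
    (h : R ⊆ R') : PMatchR I cu1 cu2 N1 R μ :=
  ⟨hμ.1.anti (union_subset_union_right h), fun i c hi j hj => hμ.2 i c hi j (h hj)⟩

lemma le_msR {N1 R : Finset N} {μ : N → Option C} (hμ : PMatchR I cu1 cu2 N1 R μ) :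
    msize μ ≤ msR I cu1 cu2 N1 R :=
  le_csSup (bddAbove_msize _) ⟨μ, hμ, rfl⟩

lemma msR_anti {N1 R R' : Finset N} (h : R ⊆ R') :
    msR I cu1 cu2 N1 R' ≤ msR I cu1 cu2 N1 R :=
  csSup_le' <| by rintro _ ⟨μ, hμ, rfl⟩; exact le_msR (hμ.anti h)

lemma msR_empty (N1 : Finset N) : msR I cu1 cu2 N1 ∅ = msAvoid I cu1 cu2 N1 := by
  simp [msR, msAvoid, PMatchR]

end Matchings

section Exchange

variable {N C : Type*} [Fintype N] (I : Inst N C)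

noncomputable def Inst.rankAbove (c : C) (i : N) : ℕ := #{y | I.Strict c (some y) (some i)}

noncomputable def Inst.rankSum (ν : N → Option C) : ℕ :=
  ∑ i, (ν i).elim 0 (I.rankAbove · i)

variable {I}

lemma rankAbove_lt {c : C} {x k : N} (h : I.Strict c (some x) (some k)) :
    I.rankAbove c x < I.rankAbove c k := by
  refine card_lt_card ((ssubset_iff_of_subset fun y hy => ?_).2 ⟨x, ?_, ?_⟩)
  · simp only [mem_filter, mem_univ, true_and] at hy ⊢
    exact hy.trans h
  · simpa using h
  · simpa using Inst.Strict.irrefl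

variable [DecidableEq N]

lemma rankSum_comp_swap_lt {ν : N → Option C} {x k : N} {c : C} (hx : ν x = none)
    (hk : ν k = some c) (h : I.Strict c (some x) (some k)) :
    I.rankSum (ν ∘ Equiv.swap x k) < I.rankSum ν := by
  calc I.rankSum (ν ∘ Equiv.swap x k)
      = ∑ i, (ν i).elim 0 (I.rankAbove · (Equiv.swap x k i)) := by
        rw [Inst.rankSum, ← Equiv.sum_comp (Equiv.swap x k)]
        simp
    _ < I.rankSum ν := by
      refine sum_lt_sum (fun i _ => ?_) ⟨k, mem_univ k, by simpa [hk] using rankAbove_lt h⟩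
      by_cases hix : i = x
      · simp [hix, hx]
      by_cases hik : i = k
      · simpa [hik, hk] using (rankAbove_lt h).le
      · rw [Equiv.swap_apply_of_ne_of_ne hix hik]

variable [DecidableEq C] {cu1 cu2 : C} {N1 R : Finset N} {ν : N → Option C} {x k : N} {c : C}

lemma PMatchR.insert_of_forall_not_strict (hν : PMatchR I cu1 cu2 N1 R ν) (hx : ν x = none)
    (hdom : ∀ k c, ν k = some c → ¬ I.Strict c (some x) (some k)) :
    PMatchR I cu1 cu2 N1 (insert x R) ν := by
  refine ⟨?_, fun i c hi j hj => ?_⟩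
  · simpa [union_insert] using hν.1.insert_of_eq_none hx
  · obtain rfl | hj := mem_insert.1 hj
    exacts [hdom i c hi, hν.2 i c hi j hj]

lemma PMatchR.comp_swap (hν : PMatchR I cu1 cu2 N1 R ν) (hx : x ∉ N1 ∪ R) (hxν : ν x = none)
    (hk : ν k = some c) (h : I.Strict c (some x) (some k)) :
    PMatchR I cu1 cu2 N1 R (ν ∘ Equiv.swap x k) := by
  obtain ⟨⟨hcap, havoid, helig⟩, hdom⟩ := hν
  have hxk : x ≠ k := by rintro rfl; simp [hxν] at hk
  have hedge : ∀ i c', (ν ∘ Equiv.swap x k) i = some c' →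
      i = x ∧ c' = c ∨ ν i = some c' := by
    intro i c' hi
    by_cases hix : i = x
    · simp_all
    by_cases hik : i = k
    · simp_all
    · simp_all [Equiv.swap_apply_of_ne_of_ne hix hik]
  refine ⟨⟨hcap.comp_perm _, fun i hi => ?_, fun i c' hi => ?_⟩, fun i c' hi j hj => ?_⟩
  · have hix : i ≠ x := by rintro rfl; exact hx hi
    by_cases hik : i = k
    · simp [hik, hxν]
    · simp [Equiv.swap_apply_of_ne_of_ne hix hik, havoid i hi]
  · obtain ⟨rfl, rfl⟩ | hi := hedge i c' hi
    · obtain ⟨h1, h2, hke⟩ := helig k c' hk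
      exact ⟨h1, h2, h.trans hke⟩
    · exact helig i c' hi
  · obtain ⟨rfl, rfl⟩ | hi := hedge i c' hi
    · exact fun hj' => hdom k c' hk j hj (hj'.trans h)
    · exact hdom i c' hi j hj

lemma PMatchR.ne_none_of_msR_insert_lt
    (hdrop : ∀ x ∉ N1 ∪ R, msR I cu1 cu2 N1 (insert x R) < msR I cu1 cu2 N1 R)
    (hν : PMatchR I cu1 cu2 N1 R ν) (hmax : msize ν = msR I cu1 cu2 N1 R) (hx : x ∉ N1 ∪ R) :
    ν x ≠ none := by
  induction hn : I.rankSum ν using Nat.strong_induction_on generalizing ν x with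
  | _ n ih =>
  intro hxν
  by_cases hdom : ∃ k c, ν k = some c ∧ I.Strict c (some x) (some k)
  · obtain ⟨k, c, hk, hxk⟩ := hdom
    have hkR : k ∉ N1 ∪ R := fun h => by simp [hν.1.2.1 k h] at hk
    exact ih _ (hn ▸ rankSum_comp_swap_lt hxν hk hxk) (hν.comp_swap hx hxν hk hxk)
      (by rw [msize_comp_perm, hmax]) hkR rfl (by simp [hxν])
  · simp only [not_exists, not_and] at hdom
    exact (le_msR (hν.insert_of_forall_not_strict hxν hdom)).not_gt (hmax ▸ hdrop x hx)

end Exchange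

section SRR

variable {N C : Type*} [Fintype N] [DecidableEq N] [DecidableEq C] {I : Inst N C} {cu1 cu2 : C}
  {order : List N}

lemma srrN1_eq_foldl : srrN1 I cu1 cu2 order = order.foldl (greedyStep fun N1 i =>
    N1.card < I.quota cu1 ∧ msAvoid I cu1 cu2 (insert i N1) = msAvoid I cu1 cu2 ∅) ∅ :=
  rfl

lemma msAvoid_srrN1 : msAvoid I cu1 cu2 (srrN1 I cu1 cu2 order) = msAvoid I cu1 cu2 ∅ := by
  rw [srrN1_eq_foldl]
  exact foldl_greedyStep_induction (Q := fun s => msAvoid I cu1 cu2 s = msAvoid I cu1 cu2 ∅)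
    (fun _ _ _ h => h.2) _ rfl

lemma exists_msAvoid_insert_lt_of_srrN1 {i j : N} (hj : j ∈ order)
    (hji : order.idxOf j < order.idxOf i) (hi : i ∈ srrN1 I cu1 cu2 order)
    (hj1 : j ∉ srrN1 I cu1 cu2 order) :
    ∃ t ⊆ srrN1 I cu1 cu2 order, msAvoid I cu1 cu2 (insert j t) < msAvoid I cu1 cu2 ∅ := by
  rw [srrN1_eq_foldl] at hi hj1 ⊢
  obtain ⟨t, u, htu, hu, hnot, hcard, -⟩ :=
    exists_of_idxOf_lt_of_mem_foldl_greedyStep hj hji (notMem_empty i) hi hj1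
  refine ⟨t, htu.trans hu, (msAvoid_anti (empty_subset _)).lt_of_ne ?_⟩
  exact fun h => hnot ⟨(card_le_card htu).trans_lt hcard, h⟩

lemma srrRej_eq_foldl (N1 : Finset N) : srrRej I cu1 cu2 order N1 =
    (order.filter (· ∉ N1)).reverse.foldl
      (greedyStep fun R i => msR I cu1 cu2 N1 (insert i R) = msR I cu1 cu2 N1 ∅) ∅ :=
  List.foldr_eq_foldl_reverse

lemma msR_srrRej (N1 : Finset N) :
    msR I cu1 cu2 N1 (srrRej I cu1 cu2 order N1) = msR I cu1 cu2 N1 ∅ := by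
  rw [srrRej_eq_foldl]
  exact foldl_greedyStep_induction (Q := fun R => msR I cu1 cu2 N1 R = msR I cu1 cu2 N1 ∅)
    (fun _ _ _ h => h) _ rfl

lemma msR_insert_srrRej_lt {N1 : Finset N} {x : N} (hx : x ∈ order)
    (hxR : x ∉ N1 ∪ srrRej I cu1 cu2 order N1) :
    msR I cu1 cu2 N1 (insert x (srrRej I cu1 cu2 order N1)) <
      msR I cu1 cu2 N1 (srrRej I cu1 cu2 order N1) := by
  rw [msR_srrRej]
  obtain ⟨hx1, hxR⟩ := not_or.1 (mem_union.not.1 hxR)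
  rw [srrRej_eq_foldl] at hxR ⊢
  obtain ⟨t, ht, hnot⟩ := exists_not_of_notMem_foldl_greedyStep
    (List.mem_reverse.2 (List.mem_filter.2 ⟨hx, by simpa using hx1⟩)) hxR
  exact (msR_anti (insert_subset_insert x ht)).trans_lt
    ((msR_anti (empty_subset _)).lt_of_ne hnot)

end SRR

section Final

variable {N C : Type*} [Fintype N]

lemma card_filter_lt_lt_card_filter_lt {P : N → Prop} [DecidablePred P] {f : N → ℕ} {i j : N}
    (hj : P j) (hji : f j < f i) : #{k | P k ∧ f k < f j} < #{k | P k ∧ f k < f i} := by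
  refine card_lt_card ((ssubset_iff_of_subset fun k hk => ?_).2 ⟨j, ?_, ?_⟩)
  · simp only [mem_filter, mem_univ, true_and] at hk ⊢
    exact ⟨hk.1, hk.2.trans hji⟩
  · simpa using ⟨hj, hji⟩
  · simp

variable [DecidableEq N] {I : Inst N C} {cu1 cu2 : C} {order : List N} {N1 : Finset N}
  {μP : N → Option C} {i : N}

lemma srrFinal_eq_none (h : srrFinal I cu1 cu2 order N1 μP i = none) :
    i ∉ N1 ∧ μP i = none ∧
      I.quota cu2 ≤ #{j | (j ∉ N1 ∧ μP j = none) ∧ order.idxOf j < order.idxOf i} := by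
  by_cases hi : i ∈ N1
  · simp [srrFinal, hi] at h
  cases hμ : μP i with
  | some c => simp [srrFinal, hi, hμ] at h
  | none =>
    simp only [srrFinal, hi, hμ, if_false, ite_eq_right_iff, reduceCtorEq, imp_false, not_lt] at h
    simpa [and_assoc, hi] using h

lemma srrFinal_eq_some {c : C} (h : srrFinal I cu1 cu2 order N1 μP i = some c) :
    i ∈ N1 ∧ c = cu1 ∨ μP i = some c ∨
      c = cu2 ∧
        #{j | (j ∉ N1 ∧ μP j = none) ∧ order.idxOf j < order.idxOf i} < I.quota cu2 := by
  by_cases hi : i ∈ N1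
  · simp_all [srrFinal]
  cases hμ : μP i with
  | some c' => simp_all [srrFinal]
  | none =>
    simp only [srrFinal, hi, hμ, if_false] at h
    split_ifs at h with hq
    simp_all [and_assoc]

end Final

theorem srr_respects_priorities_general (I : Inst N C) (cu1 cu2 : C) (order : List N)
    (μ : N → Option C) (hb : IsBaseline order)
    (h1P : ∀ i j : N, I.Strict cu1 (some i) (some j) ↔ order.idxOf i < order.idxOf j)
    (h2P : ∀ i j : N, I.Strict cu2 (some i) (some j) ↔ order.idxOf i < order.idxOf j)
    (hout : IsSRROutcome I cu1 cu2 order μ) :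
    ¬ ∃ (i j : N) (c : C), μ i = some c ∧ μ j = none ∧ I.Strict c (some j) (some i) := by
  rintro ⟨i, j, c, hi, hj, hji⟩
  obtain ⟨μP, hμP, hmax, rfl⟩ := hout
  set N1 := srrN1 I cu1 cu2 order
  set R := srrRej I cu1 cu2 order N1
  obtain ⟨hj1, hjP, hjq⟩ := srrFinal_eq_none hj
  rcases srrFinal_eq_some hi with ⟨hi1, hc⟩ | hiP | ⟨hc, hiq⟩
  · obtain ⟨t, ht, hlt⟩ :=
      exists_msAvoid_insert_lt_of_srrN1 (hb.2 j) ((h1P j i).1 (hc ▸ hji)) hi1 hj1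
    have hμt : PMatch I cu1 cu2 (insert j t) μP :=
      (hμP.1.anti (ht.trans subset_union_left)).insert_of_eq_none hjP
    rw [msR_srrRej, msR_empty, msAvoid_srrN1] at hmax
    exact (le_msAvoid hμt).not_gt (hmax ▸ hlt)
  · by_cases hjR : j ∈ R
    · exact hμP.2 i c hiP j hjR hji
    · exact hμP.ne_none_of_msR_insert_lt (fun x hx => msR_insert_srrRej_lt (hb.2 x) hx) hmax
        (fun h => (mem_union.1 h).elim hj1 hjR) hjP
  · have hji' := (h2P j i).1 (hc ▸ hji)
    exact hjq.not_gt ((card_filter_lt_lt_card_filter_lt ⟨hj1, hjP⟩ hji').trans hiq)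

/-- Every matching output by the SRR rule respects priorities: there are no
agents `i, j` and category `c` such that `μ i = c`, `μ j = ∅`, and `j ≻_c i`. -/
theorem srr_respects_priorities (I : Inst N C) (cu1 cu2 : C) (order : List N)
    (μ : N → Option C) (hne : cu1 ≠ cu2) (hb : IsBaseline order)
    (h1E : ∀ i : N, I.Eligible i cu1) (h2E : ∀ i : N, I.Eligible i cu2)
    (h1P : ∀ i j : N, I.Strict cu1 (some i) (some j) ↔ order.idxOf i < order.idxOf j)
    (h2P : ∀ i j : N, I.Strict cu2 (some i) (some j) ↔ order.idxOf i < order.idxOf j)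
    (hout : IsSRROutcome I cu1 cu2 order μ) :
    ¬ ∃ (i j : N) (c : C), μ i = some c ∧ μ j = none ∧ I.Strict c (some j) (some i) :=
  srr_respects_priorities_general I cu1 cu2 order μ hb h1P h2P hout
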